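/- arXiv:1312.4632 — 4 statements merged into one kernel-verified Lean document; each statement's English description precedes it below -/
import Mathlib

section
/- The function f(a) = (sinh(ca)/sinh(cL)) · exp(∫_a^L c/sinh(cu) du) satisfies the integral equation f(a) = sinh(ca)/sinh(cL) + ∫_a^L (c sinh(ca)/sinh²(cx)) f(x) dx for all 0 < a < L, and f(L) = 1. -/
open Real Set

/-! With `g u = c / sinh (c u)` the kernel factors as
`c sinh (c a) / sinh² (c x) · f x = (sinh (c a) / sinh (c L)) · g x · exp (∫_x^L g)`,
and `g x · exp (∫_x^L g)` is the derivative of `-exp (∫_x^L g)`, so the integral equals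
`(sinh (c a) / sinh (c L)) · (exp (∫_a^L g) - 1) = f a - sinh (c a) / sinh (c L)`. -/

theorem intervalIntegral.integral_mul_exp_integral_eq_exp_sub_one {g : ℝ → ℝ} {a b : ℝ}
    (hab : a ≤ b) (hg : ContinuousOn g (Icc a b)) :
    ∫ x in a..b, g x * exp (∫ u in x..b, g u) = exp (∫ u in a..b, g u) - 1 := by
  have hprim : ContinuousOn (fun x => ∫ u in x..b, g u) (Icc a b) := by
    rw [← uIcc_of_le hab]
    exact intervalIntegral.continuousOn_primitive_interval_left
      (μ := MeasureTheory.volume) (by rw [uIcc_of_le hab]; exact hg.integrableOn_Icc)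
  have hderiv : ∀ x ∈ Ioo a b,
      HasDerivAt (fun x => -exp (∫ u in x..b, g u)) (g x * exp (∫ u in x..b, g u)) x := by
    intro x hx
    have hprim_x := intervalIntegral.integral_hasDerivAt_left
      ((hg.mono (Icc_subset_Icc hx.1.le le_rfl)).intervalIntegrable_of_Icc hx.2.le)
      ((hg.mono Ioo_subset_Icc_self).stronglyMeasurableAtFilter isOpen_Ioo x hx)
      (hg.continuousAt (Icc_mem_nhds hx.1 hx.2))
    exact hprim_x.exp.neg.congr_deriv (by ring)
  rw [intervalIntegral.integral_eq_sub_of_hasDerivAt_of_le hab hprim.rexp.neg hderiv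
    ((hg.mul hprim.rexp).intervalIntegrable_of_Icc hab)]
  simp only [Pi.neg_apply, intervalIntegral.integral_same, exp_zero]
  ring

/-- `f a = (sinh (c a) / sinh (c L)) · exp (∫_a^L c / sinh (c u) du)` satisfies the
integral equation `f a = sinh (c a) / sinh (c L) + ∫_a^L (c sinh (c a) / sinh² (c x)) f x dx`
for `0 < a < L`, and `f L = 1`. -/
theorem stmt_6 (c L : ℝ) (hc : 0 < c) (hL : 0 < L)
    (f : ℝ → ℝ)
    (hf : ∀ a : ℝ, f a = Real.sinh (c * a) / Real.sinh (c * L) *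
      Real.exp (∫ u in a..L, c / Real.sinh (c * u))) :
    (∀ a : ℝ, 0 < a → a < L →
      f a = Real.sinh (c * a) / Real.sinh (c * L)
        + ∫ x in a..L, c * Real.sinh (c * a) / (Real.sinh (c * x)) ^ 2 * f x)
    ∧ f L = 1 := by
  have hsinh_pos : ∀ x, 0 < x → 0 < sinh (c * x) := fun x hx => sinh_pos_iff.2 (mul_pos hc hx)
  refine ⟨fun a ha haL => ?_, by simp [hf L, (hsinh_pos L hL).ne']⟩
  have hg : ContinuousOn (fun u => c / sinh (c * u)) (Icc a L) :=
    continuousOn_const.div (by fun_prop) fun x hx => (hsinh_pos x (ha.trans_le hx.1)).ne'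
  have hkernel : EqOn (fun x => c * sinh (c * a) / sinh (c * x) ^ 2 * f x)
      (fun x => sinh (c * a) / sinh (c * L) *
        (c / sinh (c * x) * exp (∫ u in x..L, c / sinh (c * u)))) (uIcc a L) := by
    intro x hx
    rw [uIcc_of_le haL.le] at hx
    have hsx := (hsinh_pos x (ha.trans_le hx.1)).ne'
    simp only [hf x]
    field_simp
  rw [intervalIntegral.integral_congr hkernel, intervalIntegral.integral_const_mul,
    intervalIntegral.integral_mul_exp_integral_eq_exp_sub_one haL.le hg, hf a]
  ring
end

section
/- The limit as a ↓ 0 of (sinh(ca)/sinh(cL)) · exp(∫_a^L c/sinh(cu) du) equals 2/(1 + cosh(cL)). -/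
open Real Filter

/-!
On `(0, ∞)` an antiderivative of `1 / sinh` is `log (sinh x) - log (1 + cosh x)`
(that is, `log (tanh (x / 2))`), because `cosh² - sinh² = 1`. Hence, after the substitution
`x = c u`, the product equals `(1 + cosh (c a)) / (1 + cosh (c L))` exactly, which is continuous
in `a` and tends to `2 / (1 + cosh (c L))`.
-/

namespace Real

lemma hasDerivAt_log_sinh_sub_log_one_add_cosh {x : ℝ} (hx : 0 < x) :
    HasDerivAt (fun x => log (sinh x) - log (1 + cosh x)) (sinh x)⁻¹ x := by
  have hsinh : 0 < sinh x := sinh_pos_iff.2 hx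
  have hcosh : 0 < 1 + cosh x := by positivity
  refine (((hasDerivAt_sinh x).log hsinh.ne').sub
    (((hasDerivAt_cosh x).const_add 1).log hcosh.ne')).congr_deriv ?_
  field_simp
  linear_combination cosh_sq_sub_sinh_sq x

lemma integral_inv_sinh {a b : ℝ} (ha : 0 < a) (hb : 0 < b) :
    ∫ x in a..b, (sinh x)⁻¹ =
      (log (sinh b) - log (1 + cosh b)) - (log (sinh a) - log (1 + cosh a)) := by
  have hpos : ∀ x ∈ Set.uIcc a b, 0 < x := fun x hx => (lt_min ha hb).trans_le hx.1
  refine intervalIntegral.integral_eq_sub_of_hasDerivAt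
    (fun x hx => hasDerivAt_log_sinh_sub_log_one_add_cosh (hpos x hx)) ?_
  exact (continuous_sinh.continuousOn.inv₀ fun x hx => (sinh_pos_iff.2 (hpos x hx)).ne')
    |>.intervalIntegrable

lemma sinh_div_sinh_mul_exp_integral_inv_sinh {a b : ℝ} (ha : 0 < a) (hb : 0 < b) :
    sinh a / sinh b * exp (∫ x in a..b, (sinh x)⁻¹) = (1 + cosh a) / (1 + cosh b) := by
  have hsa : 0 < sinh a := sinh_pos_iff.2 ha
  have hsb : 0 < sinh b := sinh_pos_iff.2 hb
  have hca : 0 < 1 + cosh a := by positivity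
  have hcb : 0 < 1 + cosh b := by positivity
  rw [integral_inv_sinh ha hb, exp_sub, exp_sub, exp_sub, exp_log hsa, exp_log hsb,
    exp_log hca, exp_log hcb]
  field_simp

end Real

/-- As `a ↓ 0`, `(sinh (c a) / sinh (c L)) · exp (∫_a^L c / sinh (c u) du)` tends to
`2 / (1 + cosh (c L))`. -/
theorem stmt_8 (c L : ℝ) (hc : 0 < c) (hL : 0 < L) :
    Filter.Tendsto
      (fun a : ℝ => Real.sinh (c * a) / Real.sinh (c * L) *
        Real.exp (∫ u in a..L, c / Real.sinh (c * u)))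
      (nhdsWithin 0 (Set.Ioi 0)) (nhds (2 / (1 + Real.cosh (c * L)))) := by
  have hclosed : ∀ a ∈ Set.Ioi (0 : ℝ), sinh (c * a) / sinh (c * L) *
      exp (∫ u in a..L, c / sinh (c * u)) = (1 + cosh (c * a)) / (1 + cosh (c * L)) := by
    intro a ha
    have hsubst : ∫ u in a..L, c / sinh (c * u) = ∫ x in c * a..c * L, (sinh x)⁻¹ := by
      simp_rw [div_eq_mul_inv, intervalIntegral.integral_const_mul]
      exact intervalIntegral.mul_integral_comp_mul_left (f := fun x => (sinh x)⁻¹) c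
    rw [hsubst, sinh_div_sinh_mul_exp_integral_inv_sinh (mul_pos hc ha) (mul_pos hc hL)]
  have hcont : Continuous fun a : ℝ => (1 + cosh (c * a)) / (1 + cosh (c * L)) := by fun_prop
  have hlim := (hcont.tendsto 0).mono_left (nhdsWithin_le_nhds (s := Set.Ioi 0))
  rw [mul_zero, cosh_zero, one_add_one_eq_two] at hlim
  exact hlim.congr' (eventually_nhdsWithin_of_forall fun a ha => (hclosed a ha).symm)
end

section
/- For a > 0 and s > 0, ∫_0^∞ e^{-st} · (a/(√(2π) t^{3/2})) · exp(-a²/(2t)) dt = exp(-a√(2s)). -/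
open Real MeasureTheory Set

/-!
Substituting `t = a² / u²` turns the integral into
`∫_0^∞ (2 / √(2π)) e^{-s a²/u² - u²/2} du`, and completing the square with `c = a √(2s)` gives
`(2 / √(2π)) e^{-c} ∫_0^∞ e^{-(u - c/u)²/2} du`. The last integral is `√(2π) / 2` by the
Cauchy–Schlömilch substitution: `u ↦ u - c/u` maps `(0, ∞)` onto `ℝ` with Jacobian `1 + c/u²`,
while `u ↦ c/u` shows that the part weighted by `c/u²` equals the unweighted one for an even
integrand.
-/

variable {E : Type*} [NormedAddCommGroup E] [NormedSpace ℝ E]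

theorem image_const_div_pow_Ioi {b : ℝ} (hb : 0 < b) {n : ℕ} (hn : n ≠ 0) :
    (fun u : ℝ => b / u ^ n) '' Ioi 0 = Ioi 0 := by
  refine Subset.antisymm (image_subset_iff.2 fun u hu => div_pos hb (pow_pos hu n)) fun t ht => ?_
  have hbt : 0 < b / t := div_pos hb ht
  refine ⟨(b / t) ^ (n⁻¹ : ℝ), rpow_pos_of_pos hbt _, ?_⟩
  simp only [rpow_inv_natCast_pow hbt.le hn]
  field_simp [hb.ne']

theorem injOn_const_div_pow_Ioi {b : ℝ} (hb : 0 < b) {n : ℕ} (hn : n ≠ 0) :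
    InjOn (fun u : ℝ => b / u ^ n) (Ioi 0) := fun x (hx : 0 < x) y (hy : 0 < y) hxy => by
  have hxy' : x ^ n = y ^ n := by
    rwa [div_eq_div_iff (pow_pos hx n).ne' (pow_pos hy n).ne',
      mul_right_inj' hb.ne', eq_comm] at hxy
  exact (pow_left_inj₀ hx.le hy.le hn).1 hxy'

theorem hasDerivAt_const_div_pow (b : ℝ) (n : ℕ) {u : ℝ} (hu : u ≠ 0) :
    HasDerivAt (fun u : ℝ => b / u ^ n) (-(n * b / u ^ (n + 1))) u := by
  refine ((hasDerivAt_const u b).fun_div (hasDerivAt_pow n u) (pow_ne_zero n hu)).congr_deriv ?_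
  rcases n with _ | n
  · simp
  · simp only [Nat.add_sub_cancel]
    field_simp
    ring

theorem integral_Ioi_comp_const_div_pow (g : ℝ → E) {b : ℝ} (hb : 0 < b) {n : ℕ} (hn : n ≠ 0) :
    ∫ u in Ioi 0, (n * b / u ^ (n + 1)) • g (b / u ^ n) = ∫ t in Ioi 0, g t := by
  have := integral_image_eq_integral_abs_deriv_smul measurableSet_Ioi
    (fun u hu => (hasDerivAt_const_div_pow b n (ne_of_gt hu)).hasDerivWithinAt)
    (injOn_const_div_pow_Ioi hb hn) g
  rw [image_const_div_pow_Ioi hb hn] at this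
  rw [this]
  refine setIntegral_congr_fun measurableSet_Ioi fun u (hu : 0 < u) => ?_
  rw [abs_neg, abs_of_pos (by positivity)]

section SubConstDiv

variable {c : ℝ}

theorem image_sub_const_div_Ioi (hc : 0 < c) : (fun u : ℝ => u - c / u) '' Ioi 0 = univ := by
  refine eq_univ_of_forall fun v => ?_
  have hr : √(v ^ 2 + 4 * c) ^ 2 = v ^ 2 + 4 * c := sq_sqrt (by positivity)
  have hu : 0 < (v + √(v ^ 2 + 4 * c)) / 2 := by
    nlinarith [sqrt_nonneg (v ^ 2 + 4 * c), sq_nonneg v]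
  refine ⟨_, hu, ?_⟩
  have hdiv : c / ((v + √(v ^ 2 + 4 * c)) / 2) = (v + √(v ^ 2 + 4 * c)) / 2 - v := by
    rw [div_eq_iff hu.ne']
    linear_combination -hr / 4
  simp only [hdiv]
  ring

theorem strictMonoOn_sub_const_div (hc : 0 < c) : StrictMonoOn (fun u : ℝ => u - c / u) (Ioi 0) :=
  fun x (hx : 0 < x) y _ hxy => by
    have : c / y < c / x := div_lt_div_of_pos_left hc hx hxy
    simp only
    linarith

theorem hasDerivAt_sub_const_div {u : ℝ} (hu : u ≠ 0) :
    HasDerivAt (fun u : ℝ => u - c / u) (1 + c / u ^ 2) u := by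
  refine ((hasDerivAt_id u).sub ((hasDerivAt_const u c).fun_div (hasDerivAt_id u) hu)).congr_deriv
    ?_
  simp only [id]
  ring

theorem integral_Ioi_comp_sub_const_div_of_even {F : ℝ → E} (hF : Integrable F)
    (heven : ∀ v, F (-v) = F v) (hc : 0 < c) :
    ∫ u in Ioi 0, F (u - c / u) = (2 : ℝ)⁻¹ • ∫ v, F v := by
  have hderiv : ∀ u ∈ Ioi (0 : ℝ),
      HasDerivWithinAt (fun u => u - c / u) (1 + c / u ^ 2) (Ioi 0) u :=
    fun u hu => (hasDerivAt_sub_const_div (ne_of_gt hu)).hasDerivWithinAt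
  have hinj := (strictMonoOn_sub_const_div hc).injOn
  have habs : ∀ u ∈ Ioi (0 : ℝ), |1 + c / u ^ 2| = 1 + c / u ^ 2 := fun u hu =>
    abs_of_pos (by positivity)
  have hweighted : ∫ u in Ioi 0, (1 + c / u ^ 2) • F (u - c / u) = ∫ v, F v := by
    have := integral_image_eq_integral_abs_deriv_smul measurableSet_Ioi hderiv hinj F
    rw [image_sub_const_div_Ioi hc, Measure.restrict_univ] at this
    rw [this]
    exact setIntegral_congr_fun measurableSet_Ioi fun u hu => by simp only [habs u hu]
  have hint_weighted : IntegrableOn (fun u => (1 + c / u ^ 2) • F (u - c / u)) (Ioi 0) := by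
    have := (integrableOn_image_iff_integrableOn_abs_deriv_smul measurableSet_Ioi hderiv hinj
      F).1 (by rw [image_sub_const_div_Ioi hc]; exact hF.integrableOn)
    exact this.congr_fun (fun u hu => by simp only [habs u hu]) measurableSet_Ioi
  have hint : IntegrableOn (fun u => F (u - c / u)) (Ioi 0) := by
    refine IntegrableOn.congr_fun (Integrable.bdd_smul hint_weighted 1
      (φ := fun u => (1 + c / u ^ 2)⁻¹) (by fun_prop : Measurable _).aestronglyMeasurable ?_)
      (fun u (hu : 0 < u) => ?_) measurableSet_Ioi
    · filter_upwards [ae_restrict_mem measurableSet_Ioi] with u (hu : 0 < u)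
      rw [norm_inv, Real.norm_of_nonneg (by positivity)]
      exact inv_le_one_of_one_le₀ (le_add_of_nonneg_right (by positivity))
    · simp only [Pi.smul_apply', smul_smul]
      rw [inv_mul_cancel₀ (by positivity), one_smul]
  have hint_tail : IntegrableOn (fun u => (c / u ^ 2) • F (u - c / u)) (Ioi 0) :=
    (hint_weighted.sub hint).congr_fun (fun u _ => by
      simp only [Pi.sub_apply, add_smul, one_smul, add_sub_cancel_left]) measurableSet_Ioi
  -- The substitution `u ↦ c / u` maps `u - c / u` to its negative.
  have htail : ∫ u in Ioi 0, (c / u ^ 2) • F (u - c / u) = ∫ u in Ioi 0, F (u - c / u) := by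
    rw [← integral_Ioi_comp_const_div_pow (fun u => F (u - c / u)) hc one_ne_zero]
    refine setIntegral_congr_fun measurableSet_Ioi fun u (hu : 0 < u) => ?_
    rw [← heven]
    congr 2
    · ring
    · field_simp
      ring
  have hsplit : ∫ u in Ioi 0, (1 + c / u ^ 2) • F (u - c / u)
      = (∫ u in Ioi 0, F (u - c / u)) + ∫ u in Ioi 0, (c / u ^ 2) • F (u - c / u) := by
    rw [← integral_add hint hint_tail]
    simp only [add_smul, one_smul]
  rw [← hweighted, hsplit, htail, ← two_smul ℝ, smul_smul, inv_mul_cancel₀ two_ne_zero, one_smul]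

end SubConstDiv

theorem integral_Ioi_exp_neg_sq_sub_const_div_div_two {c : ℝ} (hc : 0 < c) :
    ∫ u in Ioi 0, exp (-(u - c / u) ^ 2 / 2) = √(2 * π) / 2 := by
  have hexp_eq (v : ℝ) : exp (-v ^ 2 / 2) = exp (-(1 / 2) * v ^ 2) := by ring_nf
  have hint : Integrable fun v : ℝ => exp (-v ^ 2 / 2) := by
    simpa only [hexp_eq] using integrable_exp_neg_mul_sq (by norm_num : (0 : ℝ) < 1 / 2)
  have hgauss : ∫ v, exp (-v ^ 2 / 2) = √(2 * π) := by
    simp only [hexp_eq, integral_gaussian]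
    ring_nf
  rw [integral_Ioi_comp_sub_const_div_of_even (F := fun v => exp (-v ^ 2 / 2)) hint
    (fun v => by simp only [even_two, Even.neg_pow]) hc, hgauss, smul_eq_mul]
  ring

theorem sq_rpow_three_halves {x : ℝ} (hx : 0 ≤ x) : (x ^ 2) ^ ((3 : ℝ) / 2) = x ^ 3 := by
  rw [← rpow_natCast, ← rpow_mul hx]
  norm_num

theorem laplace_integrand_comp_const_div_sq {a s c u : ℝ} (ha : 0 < a)
    (hc : c ^ 2 = 2 * s * a ^ 2) (hu : 0 < u) :
    (2 * a ^ 2 / u ^ 3) * (exp (-s * (a ^ 2 / u ^ 2))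
        * (a / (√(2 * π) * (a ^ 2 / u ^ 2) ^ ((3 : ℝ) / 2))) * exp (-a ^ 2 / (2 * (a ^ 2 / u ^ 2))))
      = 2 / √(2 * π) * exp (-c) * exp (-(u - c / u) ^ 2 / 2) := by
  have hpow : (a ^ 2 / u ^ 2) ^ ((3 : ℝ) / 2) = a ^ 3 / u ^ 3 := by
    rw [← div_pow, sq_rpow_three_halves (by positivity), div_pow]
  -- Completing the square: `s a² / u² + u² / 2 = c + (u - c / u)² / 2`.
  have hexp :
      -s * (a ^ 2 / u ^ 2) + -a ^ 2 / (2 * (a ^ 2 / u ^ 2)) = -c + -(u - c / u) ^ 2 / 2 := by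
    field_simp
    linear_combination hc
  calc _ = 2 * a ^ 2 / u ^ 3 * (a / (√(2 * π) * (a ^ 3 / u ^ 3)))
        * exp (-s * (a ^ 2 / u ^ 2) + -a ^ 2 / (2 * (a ^ 2 / u ^ 2))) := by
          rw [hpow, exp_add]
          ring
    _ = _ := by
          rw [hexp, exp_add]
          field_simp

/-- Laplace transform of the stable-1/2 first-passage density:
`∫_0^∞ e^{-st} (a / (√(2π) t^{3/2})) e^{-a²/(2t)} dt = e^{-a √(2s)}` for `a, s > 0`. -/
theorem stmt_11 (a s : ℝ) (ha : 0 < a) (hs : 0 < s) :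
    ∫ t in Set.Ioi (0 : ℝ),
        Real.exp (-s * t) * (a / (Real.sqrt (2 * Real.pi) * t ^ ((3 : ℝ) / 2)))
          * Real.exp (-a ^ 2 / (2 * t))
      = Real.exp (-a * Real.sqrt (2 * s)) := by
  rw [neg_mul]
  set c := a * √(2 * s)
  have hc : 0 < c := by positivity
  have hc2 : c ^ 2 = 2 * s * a ^ 2 := by rw [mul_pow, sq_sqrt (by positivity)]; ring
  rw [← integral_Ioi_comp_const_div_pow _ (pow_pos ha 2) two_ne_zero]
  rw [setIntegral_congr_fun measurableSet_Ioi fun u (hu : 0 < u) => by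
    push_cast; exact laplace_integrand_comp_const_div_sq ha hc2 hu]
  rw [integral_const_mul, integral_Ioi_exp_neg_sq_sub_const_div_div_two hc]
  field_simp
end

section
/- ∫_0^∞ Σ_{n=0}^∞ 4(-1)^n (n+1)²/(√(2π) t^{3/2}) · exp(-(n+1)²/(2t)) dt = 1, i.e., p is a probability density on (0, ∞). -/
/-!
Differentiating the Jacobi theta functional equation
`√(2πt) · ∑_{n ∈ ℤ} exp (-2π² (n + ½)² t) = ∑_{n ∈ ℤ} (-1)ⁿ exp (-n² / (2t))`
in `t` turns the density into the rapidly convergent dual series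
`p(t) = ∑_{n ≥ 0} (8 λₙ t - 4) exp (-λₙ t)` with `λₙ = π² (2n + 1)² / 2`.
Its terms are absolutely integrable on `(0, ∞)` with integrals `4 / λₙ`, so
`∫ p = (8 / π²) ∑_{n ≥ 0} 1 / (2n + 1)² = 1`.
-/

open Real MeasureTheory

namespace CoverTime

open Set Filter Nat HurwitzZeta

section ExpSeries

variable {c l : ℕ → ℝ} {C δ : ℝ}

lemma pow_mul_exp_neg_mul_le {x ε : ℝ} (hx : 0 ≤ x) (hε : 0 < ε) (k : ℕ) :
    x ^ k * exp (-(x * ε)) ≤ k ! * (2 / ε) ^ k * exp (-(x * (ε / 2))) := by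
  have hpow : x ^ k ≤ k ! * (2 / ε) ^ k * exp (x * (ε / 2)) := by
    have h := Real.pow_div_factorial_le_exp _ (mul_nonneg hx (half_pos hε).le) k
    rw [div_le_iff₀ (by positivity), mul_pow] at h
    calc x ^ k = x ^ k * (ε / 2) ^ k * (2 / ε) ^ k := by
          rw [mul_assoc, ← mul_pow, div_mul_div_cancel₀ two_ne_zero, div_self hε.ne', one_pow,
            mul_one]
      _ ≤ exp (x * (ε / 2)) * k ! * (2 / ε) ^ k := by gcongr
      _ = k ! * (2 / ε) ^ k * exp (x * (ε / 2)) := by ring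
  calc x ^ k * exp (-(x * ε)) ≤ k ! * (2 / ε) ^ k * exp (x * (ε / 2)) * exp (-(x * ε)) := by
        gcongr
    _ = k ! * (2 / ε) ^ k * exp (-(x * (ε / 2))) := by
        rw [mul_assoc, ← exp_add]; ring_nf

lemma summable_pow_mul_exp_neg_mul (hδ : 0 < δ) (hl : ∀ n, δ * n ≤ l n) (k : ℕ) {ε : ℝ}
    (hε : 0 < ε) : Summable fun n ↦ l n ^ k * exp (-(l n * ε)) := by
  have hl0 (n : ℕ) : 0 ≤ l n := le_trans (by positivity) (hl n)
  have hgeom : Summable fun n ↦ exp (-(ε / 2 * δ) * (l n / δ)) :=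
    summable_exp_nat_mul_of_ge (neg_neg_of_pos (by positivity)) fun n ↦ by
      rw [le_div_iff₀ hδ, mul_comm]; exact hl n
  refine .of_nonneg_of_le (fun n ↦ by have := hl0 n; positivity)
    (fun n ↦ (pow_mul_exp_neg_mul_le (hl0 n) hε k).trans_eq ?_)
    (hgeom.mul_left (k ! * (2 / ε) ^ k))
  congr 2
  field_simp

lemma summable_mul_pow_mul_exp_neg_mul (hc : ∀ n, |c n| ≤ C) (hδ : 0 < δ)
    (hl : ∀ n, δ * n ≤ l n) (k : ℕ) {ε : ℝ} (hε : 0 < ε) :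
    Summable fun n ↦ c n * l n ^ k * exp (-(l n * ε)) := by
  refine .of_norm_bounded ((summable_pow_mul_exp_neg_mul hδ hl k hε).mul_left C) fun n ↦ ?_
  have hl0 : 0 ≤ l n := le_trans (by positivity) (hl n)
  have hterm : 0 ≤ l n ^ k * exp (-(l n * ε)) := by positivity
  rw [mul_assoc, norm_mul, Real.norm_eq_abs, Real.norm_of_nonneg hterm]
  exact mul_le_mul_of_nonneg_right (hc n) (by positivity)

lemma hasDerivAt_tsum_mul_exp_neg_mul (hc : ∀ n, |c n| ≤ C) (hδ : 0 < δ)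
    (hl : ∀ n, δ * n ≤ l n) {y : ℝ} (hy : 0 < y) :
    HasDerivAt (fun y ↦ ∑' n, c n * exp (-(l n * y)))
      (-∑' n, c n * l n * exp (-(l n * y))) y := by
  have hl0 (n : ℕ) : 0 ≤ l n := le_trans (by positivity) (hl n)
  have hy' : y ∈ Ioi (y / 2) := mem_Ioi.2 (half_lt_self hy)
  have hterm (n : ℕ) (z : ℝ) : HasDerivAt (fun z ↦ c n * exp (-(l n * z)))
      (-(c n * l n * exp (-(l n * z)))) z := by
    have hlin : HasDerivAt (fun z ↦ -(l n * z)) (-l n) z := by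
      simpa using (hasDerivAt_id z).const_mul (-l n)
    exact (hlin.exp.const_mul (c n)).congr_deriv (by ring)
  have hbound (n : ℕ) (z : ℝ) (hz : z ∈ Ioi (y / 2)) :
      ‖-(c n * l n * exp (-(l n * z)))‖ ≤ |c n| * l n ^ 1 * exp (-(l n * (y / 2))) := by
    rw [norm_neg, norm_mul, norm_mul, Real.norm_of_nonneg (hl0 n),
      Real.norm_of_nonneg (exp_pos _).le, pow_one]
    have := hl0 n
    gcongr
    · exact (Real.norm_eq_abs _).le
    · exact le_of_lt hz
  have hsum := summable_mul_pow_mul_exp_neg_mul (c := fun n ↦ |c n|) (fun n ↦ by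
    rw [abs_abs]; exact hc n) hδ hl 1 (half_pos hy)
  have h0 := summable_mul_pow_mul_exp_neg_mul hc hδ hl 0 hy
  simp only [pow_zero, mul_one] at h0
  rw [← tsum_neg]
  exact hasDerivAt_tsum_of_isPreconnected hsum isOpen_Ioi isPreconnected_Ioi
    (fun n z _ ↦ hterm n z) hbound hy' h0 hy'

end ExpSeries

noncomputable def decayRate (n : ℕ) : ℝ := π ^ 2 * (2 * n + 1) ^ 2 / 2

lemma decayRate_pos (n : ℕ) : 0 < decayRate n := by
  unfold decayRate; positivity

lemma mul_le_decayRate (n : ℕ) : π ^ 2 / 2 * n ≤ decayRate n := by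
  unfold decayRate
  have : (n : ℝ) ≤ (2 * n + 1) ^ 2 := by nlinarith
  rw [mul_div_right_comm]
  gcongr

noncomputable def halfTheta (t : ℝ) : ℝ := ∑' n : ℕ, exp (-(decayRate n * t))

noncomputable def altTheta (y : ℝ) : ℝ :=
  ∑' n : ℕ, (-1) ^ n * exp (-(((n : ℝ) + 1) ^ 2 * y))

lemma halfTheta_eq {t : ℝ} (ht : 0 < t) :
    halfTheta t = evenKernel ↑(1 / 2 : ℝ) (2 * π * t) / 2 := by
  rw [eq_div_iff two_ne_zero, halfTheta, ← tsum_mul_right]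
  refine ((hasSum_int_evenKernel (1 / 2 : ℝ) (by positivity)).nat_add_neg_add_one.congr_fun
    fun n ↦ ?_).tsum_eq
  -- the indices `n` and `-(n + 1)` of the sum over `ℤ` contribute the same term
  have hexp (m : ℝ) (hm : m ^ 2 = (n + 1 / 2) ^ 2) :
      -π * m ^ 2 * (2 * π * t) = -(decayRate n * t) := by
    rw [hm, decayRate]; ring
  push_cast
  rw [hexp _ rfl, hexp _ (by ring)]
  ring

lemma altTheta_eq {y : ℝ} (hy : 0 < y) :
    altTheta y = (1 - cosKernel ↑(1 / 2 : ℝ) (y / π)) / 2 := by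
  rw [eq_div_iff two_ne_zero, altTheta, ← tsum_mul_right]
  refine ((hasSum_nat_cosKernel₀ (1 / 2 : ℝ) (t := y / π) (by positivity)).neg.congr_fun
    fun n ↦ ?_).tsum_eq.trans (by ring)
  have hcos : cos (2 * π * (1 / 2) * (n + 1)) = -(-1) ^ n := by
    rw [show 2 * π * (1 / 2) * (n + 1) = 0 + ((n + 1 : ℕ) : ℝ) * π by push_cast; ring,
      cos_add_nat_mul_pi, cos_zero, pow_succ]
    ring
  rw [hcos]
  field_simp

lemma halfTheta_functional_equation {t : ℝ} (ht : 0 < t) :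
    √(2 * π * t) * (2 * halfTheta t) = 1 - 2 * altTheta (2 * t)⁻¹ := by
  rw [halfTheta_eq ht, altTheta_eq (by positivity), evenKernel_functional_equation,
    ← sqrt_eq_rpow, show (2 * t)⁻¹ / π = 1 / (2 * π * t) by field_simp]
  have hs : √(2 * π * t) ≠ 0 := by positivity
  field_simp
  ring

lemma hasDerivAt_halfTheta {t : ℝ} (ht : 0 < t) :
    HasDerivAt halfTheta (-∑' n, decayRate n * exp (-(decayRate n * t))) t := by
  have h := hasDerivAt_tsum_mul_exp_neg_mul (c := fun _ ↦ 1) (C := 1) (fun _ ↦ by simp)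
    (by positivity) mul_le_decayRate ht
  simp only [one_mul] at h
  exact h

lemma hasDerivAt_altTheta {y : ℝ} (hy : 0 < y) :
    HasDerivAt altTheta
      (-∑' n : ℕ, (-1) ^ n * ((n : ℝ) + 1) ^ 2 * exp (-(((n : ℝ) + 1) ^ 2 * y))) y :=
  hasDerivAt_tsum_mul_exp_neg_mul (C := 1) (δ := 1) (fun n ↦ by simp)
    one_pos (fun n ↦ by nlinarith) hy

lemma halfTheta_functional_equation_deriv {t D A : ℝ} (ht : 0 < t)
    (hD : HasDerivAt halfTheta D t) (hA : HasDerivAt altTheta A (2 * t)⁻¹) :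
    π / √(2 * π * t) * (2 * halfTheta t) + 2 * √(2 * π * t) * D = A / t ^ 2 := by
  have hlhs := (((hasDerivAt_id' t).const_mul (2 * π)).sqrt (by positivity)).fun_mul
    (hD.const_mul 2)
  have hrhs := ((hA.comp t (((hasDerivAt_id' t).const_mul 2).fun_inv (by positivity))).const_mul
    2).const_sub 1
  have h := hlhs.unique (hrhs.congr_of_eventuallyEq
    (eventually_of_mem (Ioi_mem_nhds ht) fun s hs ↦ halfTheta_functional_equation hs))
  have hs : √(2 * π * t) ≠ 0 := by positivity
  field_simp at h ⊢
  linarith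

noncomputable def dualTerm (b t : ℝ) : ℝ := (8 * b * t - 4) * exp (-(b * t))

section Laplace

variable {b : ℝ}

lemma integrableOn_exp_neg_mul (hb : 0 < b) : IntegrableOn (fun t ↦ exp (-(b * t))) (Ioi 0) :=
  (exp_neg_integrableOn_Ioi 0 hb).congr_fun (fun t _ ↦ by simp only [neg_mul]) measurableSet_Ioi

lemma integrableOn_mul_exp_neg_mul (hb : 0 < b) :
    IntegrableOn (fun t ↦ t * exp (-(b * t))) (Ioi 0) :=
  (integrableOn_rpow_mul_exp_neg_mul_rpow (s := 1) (by norm_num) one_pos hb).congr_fun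
    (fun t _ ↦ by simp only [rpow_one, neg_mul]) measurableSet_Ioi

lemma integral_exp_neg_mul (hb : 0 < b) : ∫ t in Ioi (0 : ℝ), exp (-(b * t)) = 1 / b := by
  simpa using integral_rpow_mul_exp_neg_mul_Ioi one_pos hb

lemma integral_mul_exp_neg_mul (hb : 0 < b) :
    ∫ t in Ioi (0 : ℝ), t * exp (-(b * t)) = 1 / b ^ 2 := by
  have h := integral_rpow_mul_exp_neg_mul_Ioi two_pos hb
  norm_num [Gamma_two] at h
  rw [h, one_div]

lemma dualTerm_eq :
    dualTerm b = fun t ↦ 8 * b * (t * exp (-(b * t))) - 4 * exp (-(b * t)) := by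
  ext t; unfold dualTerm; ring

lemma integrableOn_dualTerm (hb : 0 < b) : IntegrableOn (dualTerm b) (Ioi 0) := by
  rw [dualTerm_eq]
  exact ((integrableOn_mul_exp_neg_mul hb).const_mul _).sub
    ((integrableOn_exp_neg_mul hb).const_mul _)

lemma integral_dualTerm (hb : 0 < b) : ∫ t in Ioi (0 : ℝ), dualTerm b t = 4 / b := by
  rw [dualTerm_eq, integral_sub ((integrableOn_mul_exp_neg_mul hb).const_mul _)
    ((integrableOn_exp_neg_mul hb).const_mul _), integral_const_mul, integral_const_mul,
    integral_mul_exp_neg_mul hb, integral_exp_neg_mul hb]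
  field_simp
  ring

lemma integral_norm_dualTerm_le (hb : 0 < b) :
    ∫ t in Ioi (0 : ℝ), ‖dualTerm b t‖ ≤ 12 / b := by
  have hint : IntegrableOn (fun t ↦ 8 * b * (t * exp (-(b * t))) + 4 * exp (-(b * t))) (Ioi 0) :=
    ((integrableOn_mul_exp_neg_mul hb).const_mul _).add ((integrableOn_exp_neg_mul hb).const_mul _)
  calc ∫ t in Ioi (0 : ℝ), ‖dualTerm b t‖
      ≤ ∫ t in Ioi (0 : ℝ), 8 * b * (t * exp (-(b * t))) + 4 * exp (-(b * t)) := by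
        refine setIntegral_mono_on (integrableOn_dualTerm hb).norm hint measurableSet_Ioi
          fun t ht ↦ ?_
        have hbt : 0 ≤ 8 * b * t := by have : 0 < t := ht; positivity
        rw [dualTerm, norm_mul, norm_of_nonneg (exp_pos _).le, norm_eq_abs]
        have habs : |8 * b * t - 4| ≤ 8 * b * t + 4 := abs_le.2 ⟨by linarith, by linarith⟩
        exact (mul_le_mul_of_nonneg_right habs (exp_pos _).le).trans_eq (by ring)
    _ = 12 / b := by
        rw [integral_add ((integrableOn_mul_exp_neg_mul hb).const_mul _)
          ((integrableOn_exp_neg_mul hb).const_mul _), integral_const_mul, integral_const_mul,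
          integral_mul_exp_neg_mul hb, integral_exp_neg_mul hb]
        field_simp
        ring

end Laplace

noncomputable def coverDensity (t : ℝ) : ℝ :=
  ∑' n : ℕ, 4 * (-1) ^ n * ((n : ℝ) + 1) ^ 2 / (√(2 * π) * t ^ ((3 : ℝ) / 2))
    * exp (-((n : ℝ) + 1) ^ 2 / (2 * t))

lemma coverDensity_eq_mul_tsum {t : ℝ} (ht : 0 < t) :
    coverDensity t = 4 / (√(2 * π) * (t * √t)) * ∑' n : ℕ,
      (-1) ^ n * ((n : ℝ) + 1) ^ 2 * exp (-(((n : ℝ) + 1) ^ 2 * (2 * t)⁻¹)) := by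
  have ht32 : t ^ ((3 : ℝ) / 2) = t * √t := by
    rw [sqrt_eq_rpow, ← rpow_one_add' ht.le (by norm_num)]
    norm_num
  rw [coverDensity, ← tsum_mul_left, ht32]
  refine tsum_congr fun n ↦ ?_
  rw [neg_div, div_eq_mul_inv (_ ^ 2) (2 * t)]
  ring

lemma tsum_dualTerm_decayRate {t : ℝ} (ht : 0 < t) :
    ∑' n, dualTerm (decayRate n) t =
      8 * t * ∑' n, decayRate n * exp (-(decayRate n * t)) - 4 * halfTheta t := by
  have h₀ := summable_pow_mul_exp_neg_mul (by positivity) mul_le_decayRate 0 ht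
  have h₁ := summable_pow_mul_exp_neg_mul (by positivity) mul_le_decayRate 1 ht
  simp only [pow_zero, one_mul, pow_one] at h₀ h₁
  rw [halfTheta, ← tsum_mul_left, ← tsum_mul_left,
    ← (h₁.mul_left _).tsum_sub (h₀.mul_left _)]
  exact tsum_congr fun n ↦ by rw [dualTerm]; ring

lemma coverDensity_eq_tsum_dualTerm {t : ℝ} (ht : 0 < t) :
    coverDensity t = ∑' n, dualTerm (decayRate n) t := by
  have hrel := halfTheta_functional_equation_deriv ht (hasDerivAt_halfTheta ht)
    (hasDerivAt_altTheta (by positivity))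
  rw [coverDensity_eq_mul_tsum ht, tsum_dualTerm_decayRate ht]
  rw [sqrt_mul (by positivity)] at hrel
  generalize ∑' n, decayRate n * exp (-(decayRate n * t)) = S at hrel ⊢
  generalize
    ∑' n : ℕ, (-1) ^ n * ((n : ℝ) + 1) ^ 2 * exp (-(((n : ℝ) + 1) ^ 2 * (2 * t)⁻¹)) = H at hrel ⊢
  have hs2 := sq_sqrt (by positivity : (0 : ℝ) ≤ 2 * π)
  have hr2 := sq_sqrt ht.le
  have hs : 0 < √(2 * π) := by positivity
  have hr : 0 < √t := by positivity
  generalize √(2 * π) = s at hrel hs2 hs ⊢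
  generalize √t = r at hrel hr2 hr ⊢
  field_simp at hrel ⊢
  refine mul_left_cancel₀ (mul_pos hs hr).ne' ?_
  linear_combination 4 * hrel + 4 * halfTheta t * t * r ^ 2 * hs2 + 8 * π * halfTheta t * t * hr2

lemma hasSum_one_div_odd_sq :
    HasSum (fun n : ℕ ↦ 1 / (2 * (n : ℝ) + 1) ^ 2) (π ^ 2 / 8) := by
  have heven : HasSum (fun n : ℕ ↦ 1 / ((2 * n : ℕ) : ℝ) ^ 2) (π ^ 2 / 6 / 4) :=
    (hasSum_zeta_two.div_const 4).congr_fun fun n ↦ by push_cast; ring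
  have hinj : Function.Injective (fun n : ℕ ↦ 2 * n + 1) := fun a b h ↦ by
    simp only at h; omega
  have hodd := (hasSum_zeta_two.summable.comp_injective hinj).hasSum
  have hval := hasSum_zeta_two.unique
    (HasSum.even_add_odd (f := fun n : ℕ ↦ 1 / (n : ℝ) ^ 2) heven hodd)
  rw [show ∑' n, ((fun n : ℕ ↦ 1 / (n : ℝ) ^ 2) ∘ fun n ↦ 2 * n + 1) n = π ^ 2 / 8 by
    linarith] at hodd
  exact hodd.congr_fun fun n ↦ by simp

lemma hasSum_four_div_decayRate : HasSum (fun n ↦ 4 / decayRate n) 1 := by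
  have h := hasSum_one_div_odd_sq.mul_left (8 / π ^ 2)
  rw [show 8 / π ^ 2 * (π ^ 2 / 8) = (1 : ℝ) by field_simp] at h
  exact h.congr_fun fun n ↦ by unfold decayRate; field_simp; ring

lemma summable_integral_norm_dualTerm_decayRate :
    Summable fun n ↦ ∫ t in Ioi (0 : ℝ), ‖dualTerm (decayRate n) t‖ :=
  .of_nonneg_of_le (fun _ ↦ integral_nonneg fun _ ↦ norm_nonneg _)
    (fun n ↦ (integral_norm_dualTerm_le (decayRate_pos n)).trans_eq (by ring))
    (hasSum_four_div_decayRate.summable.mul_left 3)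

end CoverTime

open CoverTime

/-- `∫_0^∞ ∑_{n≥0} 4 (-1)^n (n+1)² / (√(2π) t^{3/2}) exp (-(n+1)²/(2t)) dt = 1`,
i.e. the cover-time series is a probability density on `(0, ∞)`. -/
theorem stmt_14 :
    ∫ t in Set.Ioi (0 : ℝ),
        ∑' n : ℕ, 4 * (-1) ^ n * ((n : ℝ) + 1) ^ 2
          / (Real.sqrt (2 * Real.pi) * t ^ ((3 : ℝ) / 2))
          * Real.exp (-((n : ℝ) + 1) ^ 2 / (2 * t))
      = 1 := by
  calc ∫ t in Set.Ioi 0, coverDensity t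
      = ∫ t in Set.Ioi 0, ∑' n, dualTerm (decayRate n) t :=
        setIntegral_congr_fun measurableSet_Ioi fun _ ht ↦ coverDensity_eq_tsum_dualTerm ht
    _ = ∑' n, ∫ t in Set.Ioi 0, dualTerm (decayRate n) t :=
        (integral_tsum_of_summable_integral_norm (fun n ↦ integrableOn_dualTerm (decayRate_pos n))
          summable_integral_norm_dualTerm_decayRate).symm
    _ = ∑' n, 4 / decayRate n := tsum_congr fun n ↦ integral_dualTerm (decayRate_pos n)
    _ = 1 := hasSum_four_div_decayRate.tsum_eq
end
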